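/- arXiv:2605.01174 — 4 statements merged into one kernel-verified Lean document; each statement's English description precedes it below -/
import Mathlib

section
/- Let R = ℤ[w,c,i,j,k]/(w²−8w, wc−4w, wi−2w, wj−2w, wk−2w, c²−4c, ci−2c, cj−2c, ck−2c, i²−2i, j²−2j, k²−2k, ij−c, ik−c, jk−c) and let S = ℤ[u,v]/(u², v², uv, 2u, 2v). The assignments w ↦ 8, c ↦ 4, i ↦ u+2, j ↦ u+v+2, k ↦ v+2 determine a well-defined surjective ring homomorphism q : R → S, and the kernel of q equals the ideal of R generated by the five elements g₁ = −2w + 3i + 3j + 3k − 2, g₂ = w − 2c, g₃ = −w + 3c − 2i, g₄ = −w + 3c − 2j, g₅ = −w + 3c − 2k. Consequently q induces a ring isomorphism R/(g₁,g₂,g₃,g₄,g₅) ≅ ℤ[u,v]/(u², v², uv, 2u, 2v). -/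
open MvPolynomial

noncomputable section

/-- Presentation of the Burnside ring `A(Q₈)`:
variables `X 0 = w`, `X 1 = c`, `X 2 = i`, `X 3 = j`, `X 4 = k`. -/
def relR : Ideal (MvPolynomial (Fin 5) ℤ) :=
  Ideal.span {X 0 ^ 2 - 8 * X 0, X 0 * X 1 - 4 * X 0, X 0 * X 2 - 2 * X 0,
    X 0 * X 3 - 2 * X 0, X 0 * X 4 - 2 * X 0,
    X 1 ^ 2 - 4 * X 1, X 1 * X 2 - 2 * X 1, X 1 * X 3 - 2 * X 1, X 1 * X 4 - 2 * X 1,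
    X 2 ^ 2 - 2 * X 2, X 3 ^ 2 - 2 * X 3, X 4 ^ 2 - 2 * X 4,
    X 2 * X 3 - X 1, X 2 * X 4 - X 1, X 3 * X 4 - X 1}

abbrev R : Type := MvPolynomial (Fin 5) ℤ ⧸ relR

def wR : R := Ideal.Quotient.mk relR (X 0)
def cR : R := Ideal.Quotient.mk relR (X 1)
def iR : R := Ideal.Quotient.mk relR (X 2)
def jR : R := Ideal.Quotient.mk relR (X 3)
def kR : R := Ideal.Quotient.mk relR (X 4)

/-- Presentation of `S = ℤ[u,v]/(u², v², uv, 2u, 2v)`. -/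
def relS : Ideal (MvPolynomial (Fin 2) ℤ) :=
  Ideal.span {X 0 ^ 2, X 1 ^ 2, X 0 * X 1, 2 * X 0, 2 * X 1}

abbrev S : Type := MvPolynomial (Fin 2) ℤ ⧸ relS

def uS : S := Ideal.Quotient.mk relS (X 0)
def vS : S := Ideal.Quotient.mk relS (X 1)

def g1 : R := -2 * wR + 3 * iR + 3 * jR + 3 * kR - 2
def g2 : R := wR - 2 * cR
def g3 : R := -wR + 3 * cR - 2 * iR
def g4 : R := -wR + 3 * cR - 2 * jR
def g5 : R := -wR + 3 * cR - 2 * kR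

/-!
The images of `w, c, i, j, k` satisfy the relations of `R` because `u² = v² = uv = 2u = 2v = 0`
in `S`, so `q` exists (and is unique, `R` being generated by them); it is surjective since
`u = q(i) - 2` and `v = q(k) - 2`. Modulo `𝔞 = (g₁, …, g₅)` one gets `c = 4`, `w = 8`,
`2i = 2k = 4` and `j = i + k - 2`, so `u ↦ i - 2`, `v ↦ k - 2` defines a ring map `S → R/𝔞`
whose composite with `q` is the projection `R → R/𝔞`. Hence `ker q ⊆ 𝔞`, and `𝔞 ⊆ ker q` is
a direct check.
-/

lemma RingHom.eq_zero_of_mem_span {A B : Type*} [Semiring A] [Semiring B] {f : A →+* B}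
    {s : Set A} (h : ∀ p ∈ s, f p = 0) : ∀ a ∈ Ideal.span s, f a = 0 :=
  fun _ ha ↦ Ideal.span_le.mpr (fun p hp ↦ RingHom.mem_ker.mpr (h p hp)) ha

lemma Ideal.Quotient.mk_span_eq_zero {A : Type*} [CommRing A] {s : Set A} {x : A} (hx : x ∈ s) :
    Ideal.Quotient.mk (Ideal.span s) x = 0 :=
  Ideal.Quotient.eq_zero_iff_mem.mpr (Ideal.subset_span hx)

lemma RingHom.ker_eq_of_comp_eq_mk {A B : Type*} [CommRing A] [Ring B] {f : A →+* B}
    {I : Ideal A} (hI : I ≤ RingHom.ker f) {g : B →+* A ⧸ I}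
    (hg : g.comp f = Ideal.Quotient.mk I) : RingHom.ker f = I := by
  refine le_antisymm (fun x hx ↦ ?_) hI
  rw [← Ideal.Quotient.eq_zero_iff_mem, ← hg, RingHom.comp_apply, RingHom.mem_ker.mp hx,
    map_zero]

lemma uS_sq : uS ^ 2 = 0 := by
  rw [uS, ← map_pow, Ideal.Quotient.eq_zero_iff_mem]
  exact Ideal.subset_span (by simp)

lemma vS_sq : vS ^ 2 = 0 := by
  rw [vS, ← map_pow, Ideal.Quotient.eq_zero_iff_mem]
  exact Ideal.subset_span (by simp)

lemma uS_mul_vS : uS * vS = 0 := by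
  rw [uS, vS, ← map_mul, Ideal.Quotient.eq_zero_iff_mem]
  exact Ideal.subset_span (by simp)

lemma two_mul_uS : 2 * uS = 0 := by
  rw [uS, ← map_ofNat (Ideal.Quotient.mk relS) 2, ← map_mul, Ideal.Quotient.eq_zero_iff_mem]
  exact Ideal.subset_span (by simp)

lemma two_mul_vS : 2 * vS = 0 := by
  rw [vS, ← map_ofNat (Ideal.Quotient.mk relS) 2, ← map_mul, Ideal.Quotient.eq_zero_iff_mem]
  exact Ideal.subset_span (by simp)

lemma iR_sq : iR ^ 2 = 2 * iR := by
  rw [iR, ← map_pow, ← map_ofNat (Ideal.Quotient.mk relR) 2, ← map_mul, Ideal.Quotient.eq]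
  exact Ideal.subset_span (by simp)

lemma kR_sq : kR ^ 2 = 2 * kR := by
  rw [kR, ← map_pow, ← map_ofNat (Ideal.Quotient.mk relR) 2, ← map_mul, Ideal.Quotient.eq]
  exact Ideal.subset_span (by simp)

lemma iR_mul_kR : iR * kR = cR := by
  rw [iR, kR, cR, ← map_mul, Ideal.Quotient.eq]
  exact Ideal.subset_span (by simp)

namespace R

lemma ringHom_ext {A : Type*} [Ring A] {f f' : R →+* A} (hw : f wR = f' wR) (hc : f cR = f' cR)
    (hi : f iR = f' iR) (hj : f jR = f' jR) (hk : f kR = f' kR) : f = f' := by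
  refine Ideal.Quotient.ringHom_ext (MvPolynomial.ringHom_ext' (RingHom.ext_int _ _) fun n ↦ ?_)
  fin_cases n
  exacts [hw, hc, hi, hj, hk]

def toS : R →+* S :=
  Ideal.Quotient.lift relR (aeval ![8, 4, uS + 2, uS + vS + 2, vS + 2]).toRingHom <| by
    refine RingHom.eq_zero_of_mem_span ?_
    simp only [Set.mem_insert_iff, Set.mem_singleton_iff, forall_eq_or_imp, forall_eq,
      AlgHom.toRingHom_eq_coe, RingHom.coe_coe, map_sub, map_pow, map_mul, aeval_X, aeval_ofNat,
      Matrix.cons_val_zero, Matrix.cons_val_one, Matrix.cons_val]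
    grind [uS_sq, vS_sq, uS_mul_vS, two_mul_uS, two_mul_vS]

lemma toS_wR : toS wR = 8 := by simp [toS, wR]
lemma toS_cR : toS cR = 4 := by simp [toS, cR]
lemma toS_iR : toS iR = uS + 2 := by simp [toS, iR]
lemma toS_jR : toS jR = uS + vS + 2 := by simp [toS, jR]
lemma toS_kR : toS kR = vS + 2 := by simp [toS, kR]

lemma toS_comp_aeval : toS.comp (aeval ![iR - 2, kR - 2]).toRingHom = Ideal.Quotient.mk relS := by
  refine MvPolynomial.ringHom_ext' (RingHom.ext_int _ _) fun n ↦ ?_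
  fin_cases n <;> simp [toS_iR, toS_kR, uS, vS, map_ofNat]

lemma toS_surjective : Function.Surjective toS :=
  .of_comp (g := (aeval ![iR - 2, kR - 2]).toRingHom) <| by
    rw [← RingHom.coe_comp, toS_comp_aeval]
    exact Ideal.Quotient.mk_surjective

end R

abbrev 𝔞 : Ideal R := Ideal.span {g1, g2, g3, g4, g5}

section Quotient

local notation "π" => Ideal.Quotient.mk 𝔞

lemma mk_g1 : -2 * π wR + 3 * π iR + 3 * π jR + 3 * π kR - 2 = 0 := by
  have h : π g1 = 0 := Ideal.Quotient.mk_span_eq_zero (by simp)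
  simpa only [g1, map_sub, map_add, map_mul, map_neg, map_ofNat] using h

lemma mk_g2 : π wR - 2 * π cR = 0 := by
  have h : π g2 = 0 := Ideal.Quotient.mk_span_eq_zero (by simp)
  simpa only [g2, map_sub, map_add, map_mul, map_neg, map_ofNat] using h

lemma mk_g3 : -π wR + 3 * π cR - 2 * π iR = 0 := by
  have h : π g3 = 0 := Ideal.Quotient.mk_span_eq_zero (by simp)
  simpa only [g3, map_sub, map_add, map_mul, map_neg, map_ofNat] using h

lemma mk_g4 : -π wR + 3 * π cR - 2 * π jR = 0 := by
  have h : π g4 = 0 := Ideal.Quotient.mk_span_eq_zero (by simp)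
  simpa only [g4, map_sub, map_add, map_mul, map_neg, map_ofNat] using h

lemma mk_g5 : -π wR + 3 * π cR - 2 * π kR = 0 := by
  have h : π g5 = 0 := Ideal.Quotient.mk_span_eq_zero (by simp)
  simpa only [g5, map_sub, map_add, map_mul, map_neg, map_ofNat] using h

lemma mk_cR : π cR = 4 := by
  linear_combination 2 * mk_g1 + 13 * mk_g2 + 3 * mk_g3 + 3 * mk_g4 + 3 * mk_g5

lemma mk_wR : π wR = 8 := by linear_combination mk_g2 + 2 * mk_cR

lemma two_mul_mk_iR : 2 * π iR = 4 := by linear_combination -mk_g3 - mk_g2 + mk_cR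

lemma two_mul_mk_kR : 2 * π kR = 4 := by linear_combination -mk_g5 - mk_g2 + mk_cR

lemma mk_jR : π jR = π iR + π kR - 2 := by
  linear_combination -mk_g1 - 6 * mk_g2 - mk_g3 - 2 * mk_g4 - mk_g5

def S.toQuotient : S →+* R ⧸ 𝔞 :=
  Ideal.Quotient.lift relS (aeval ![π iR - 2, π kR - 2]).toRingHom <| by
    refine RingHom.eq_zero_of_mem_span ?_
    have hi : π iR ^ 2 = 2 * π iR := by
      simpa only [map_pow, map_mul, map_ofNat] using congrArg π iR_sq
    have hk : π kR ^ 2 = 2 * π kR := by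
      simpa only [map_pow, map_mul, map_ofNat] using congrArg π kR_sq
    have hik : π iR * π kR = π cR := by simpa only [map_mul] using congrArg π iR_mul_kR
    simp only [Set.mem_insert_iff, Set.mem_singleton_iff, forall_eq_or_imp, forall_eq,
      AlgHom.toRingHom_eq_coe, RingHom.coe_coe, map_pow, map_mul, map_ofNat, aeval_X,
      Matrix.cons_val_zero, Matrix.cons_val_one, Matrix.cons_val_fin_one]
    grind [two_mul_mk_iR, two_mul_mk_kR, mk_cR]

lemma S.toQuotient_uS : S.toQuotient uS = π iR - 2 := by simp [S.toQuotient, uS]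

lemma S.toQuotient_vS : S.toQuotient vS = π kR - 2 := by simp [S.toQuotient, vS]

lemma S.toQuotient_comp_toS : S.toQuotient.comp R.toS = π := by
  refine R.ringHom_ext ?_ ?_ ?_ ?_ ?_ <;>
    simp only [RingHom.comp_apply, R.toS_wR, R.toS_cR, R.toS_iR, R.toS_jR, R.toS_kR, map_add,
      map_ofNat, S.toQuotient_uS, S.toQuotient_vS]
  · exact mk_wR.symm
  · exact mk_cR.symm
  · ring
  · linear_combination -mk_jR
  · ring

end Quotient

lemma R.ker_toS : RingHom.ker R.toS = 𝔞 := by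
  refine RingHom.ker_eq_of_comp_eq_mk ?_ S.toQuotient_comp_toS
  refine Ideal.span_le.mpr ?_
  simp only [Set.insert_subset_iff, Set.singleton_subset_iff, SetLike.mem_coe, RingHom.mem_ker,
    g1, g2, g3, g4, g5, map_sub, map_add, map_mul, map_neg, map_ofNat,
    R.toS_wR, R.toS_cR, R.toS_iR, R.toS_jR, R.toS_kR]
  grind [two_mul_uS, two_mul_vS]

theorem stmt0 :
    (∃ q : R →+* S,
      q wR = 8 ∧ q cR = 4 ∧ q iR = uS + 2 ∧ q jR = uS + vS + 2 ∧ q kR = vS + 2) ∧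
    (∀ q : R →+* S,
      (q wR = 8 ∧ q cR = 4 ∧ q iR = uS + 2 ∧ q jR = uS + vS + 2 ∧ q kR = vS + 2) →
        Function.Surjective q ∧
        RingHom.ker q = Ideal.span {g1, g2, g3, g4, g5}) ∧
    Nonempty ((R ⧸ Ideal.span {g1, g2, g3, g4, g5}) ≃+* S) := by
  refine ⟨⟨R.toS, R.toS_wR, R.toS_cR, R.toS_iR, R.toS_jR, R.toS_kR⟩, ?_,
    ⟨(Ideal.quotEquivOfEq R.ker_toS.symm).trans
      (RingHom.quotientKerEquivOfSurjective R.toS_surjective)⟩⟩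
  rintro q ⟨hw, hc, hi, hj, hk⟩
  obtain rfl : q = R.toS := R.ringHom_ext (hw.trans R.toS_wR.symm) (hc.trans R.toS_cR.symm)
    (hi.trans R.toS_iR.symm) (hj.trans R.toS_jR.symm) (hk.trans R.toS_kR.symm)
  exact ⟨R.toS_surjective, R.ker_toS⟩
end
end

section
/- Let f : ℤ³ → ℤ be the additive homomorphism f(a,b,c) = 4a + 2b + c. Then the kernel of f equals the subgroup of ℤ³ generated by the two vectors (1,−2,0) and (−1,3,−2); in particular, (0,1,−2) = (1,−2,0) + (−1,3,−2) and (1,0,−4) = 3·(1,−2,0) + 2·(−1,3,−2), and the quotient group ℤ³/⟨(1,−2,0), (−1,3,−2)⟩ is isomorphic to ℤ. -/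
/-- The augmentation (cardinality) homomorphism on `A(C₄) ≅ ℤ³`, in the basis
`[C₄/e], [C₄/C₂], [C₄/C₄]`. -/
def f : (ℤ × ℤ × ℤ) →+ ℤ :=
  AddMonoidHom.mk' (fun p => 4 * p.1 + 2 * p.2.1 + p.2.2) (by
    intro a b
    simp only [Prod.fst_add, Prod.snd_add]
    ring)

/-- `Tr_{C₂}^{C₄}(t-2)`. -/
def v1 : ℤ × ℤ × ℤ := (1, -2, 0)

/-- `Nm_{C₂}^{C₄}(t-2)`. -/
def v2 : ℤ × ℤ × ℤ := (-1, 3, -2)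

/-! The kernel of `f` is spanned by `v1, v2`: a kernel element `(a, b, c)` has `c = -4a - 2b`, and
`(3a + b) • v1 + (2a + b) • v2 = (a, b, -4a - 2b)`. Since `f (0, 0, 1) = 1`, `f` is onto, so
the quotient by its kernel is `ℤ`. -/

theorem f_apply (p : ℤ × ℤ × ℤ) : f p = 4 * p.1 + 2 * p.2.1 + p.2.2 := rfl

theorem f_v1 : f v1 = 0 := rfl

theorem f_v2 : f v2 = 0 := rfl

theorem f_surjective : Function.Surjective f :=
  fun n => ⟨(0, 0, n), by simp [f_apply]⟩

theorem zsmul_v1_add_zsmul_v2_eq_of_f_eq_zero {p : ℤ × ℤ × ℤ} (hp : f p = 0) :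
    (3 * p.1 + p.2.1) • v1 + (2 * p.1 + p.2.1) • v2 = p := by
  obtain ⟨a, b, c⟩ := p
  rw [f_apply] at hp
  simp only [v1, v2, Prod.smul_mk, Prod.mk_add_mk, smul_eq_mul, Prod.mk.injEq]
  refine ⟨by ring, by ring, by linarith⟩

theorem ker_f_eq_closure : f.ker = AddSubgroup.closure {v1, v2} := by
  ext p
  rw [AddMonoidHom.mem_ker, AddSubgroup.mem_closure_pair]
  constructor
  · intro hp
    exact ⟨_, _, zsmul_v1_add_zsmul_v2_eq_of_f_eq_zero hp⟩
  · rintro ⟨m, n, rfl⟩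
    rw [map_add, map_zsmul, map_zsmul, f_v1, f_v2, smul_zero, smul_zero, add_zero]

theorem stmt3 :
    f.ker = AddSubgroup.closure {v1, v2} ∧
    ((0, 1, -2) : ℤ × ℤ × ℤ) = v1 + v2 ∧
    ((1, 0, -4) : ℤ × ℤ × ℤ) = 3 • v1 + 2 • v2 ∧
    Nonempty (((ℤ × ℤ × ℤ) ⧸ AddSubgroup.closure {v1, v2}) ≃+ ℤ) := by
  refine ⟨ker_f_eq_closure, rfl, rfl, ?_⟩
  rw [← ker_f_eq_closure]
  exact ⟨QuotientAddGroup.quotientKerEquivOfSurjective f f_surjective⟩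
end

section
/- Let G be a cyclic group of order 4 (for instance Multiplicative (ZMod 4)) and H its unique subgroup of order 2. Let X = H be the H-set given by left multiplication of H on itself. Consider the coinduced G-set Coind_H^G X = {f : G → X | f(h·g) = h·f(g) for all h ∈ H, g ∈ G} with G-action (g·f)(g') = f(g'·g). Then Coind_H^G X is a free and transitive G-set; that is, there is a G-equivariant bijection from Coind_H^G X to G equipped with left translation. -/
open Multiplicative

/-- The coinduced `G`-set of an `H`-set `X` (where the `H`-action on `X` is given by
`sm`): the set of functions `f : G → X` with `f (h * g) = h • f g` for all `h ∈ H`,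
`g ∈ G`. -/
structure CoindSet (G : Type*) [Group G] (H : Subgroup G) (X : Type*)
    (sm : H → X → X) where
  toFun : G → X
  compat : ∀ (h : H) (g : G), toFun (↑h * g) = sm h (toFun g)

/-- The `G`-action on the coinduced set: `(g • f) g' = f (g' * g)`. -/
def coindAct {G : Type*} [Group G] {H : Subgroup G} {X : Type*} {sm : H → X → X}
    (g : G) (f : CoindSet G H X sm) : CoindSet G H X sm where
  toFun := fun g' => f.toFun (g' * g)
  compat := by
    intro h g'
    show f.toFun (↑h * g' * g) = sm h (f.toFun (g' * g))
    rw [mul_assoc]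
    exact f.compat h (g' * g)

theorem CoindSet.ext' {G : Type*} [Group G] {H : Subgroup G} {X : Type*} {sm : H → X → X}
    {f f' : CoindSet G H X sm} (h : f.toFun = f'.toFun) : f = f' := by
  cases f; cases f'; simpa using h

def K4 : Subgroup (Multiplicative (ZMod 4)) where
  carrier := {x | x = 1 ∨ x = ofAdd 2}
  one_mem' := Or.inl rfl
  mul_mem' := by rintro a b (rfl|rfl) (rfl|rfl) <;> first | exact Or.inl (by decide) | exact Or.inr (by decide)
  inv_mem' := by rintro a (rfl|rfl) <;> first | exact Or.inl (by decide) | exact Or.inr (by decide)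

theorem K4_mem (x : K4) : (x : Multiplicative (ZMod 4)) = 1 ∨ (x : Multiplicative (ZMod 4)) = ofAdd 2 := x.2

def h2 : K4 := ⟨ofAdd 2, Or.inr rfl⟩

/-- rounding down to {0,2} -/
def base (y : ZMod 4) : ZMod 4 := ((2 * (y.val / 2) : ℕ) : ZMod 4)
/-- halving on {0,2} -/
def hlf (z : ZMod 4) : ZMod 4 := (z.val / 2 : ℕ)

abbrev CS := CoindSet (Multiplicative (ZMod 4)) K4 K4 (fun h x => h * x)

def F (c : Multiplicative (ZMod 4)) : CS where
  toFun x := ⟨ofAdd (base (toAdd x + toAdd c)), by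
    have : ∀ w : ZMod 4, ofAdd (base w) = 1 ∨ ofAdd (base w) = ofAdd 2 := by decide
    exact this _⟩
  compat := by
    rintro ⟨h, (rfl | rfl)⟩ g
    · apply Subtype.ext
      show ofAdd (base (toAdd ((1:Multiplicative (ZMod 4)) * g) + toAdd _)) = 1 * ofAdd (base (toAdd g + toAdd _))
      rw [one_mul, one_mul]
    · apply Subtype.ext
      show ofAdd (base (toAdd (ofAdd 2 * g) + toAdd _)) = ofAdd 2 * ofAdd (base (toAdd g + toAdd _))
      have key : ∀ w : ZMod 4, base (2 + w) = 2 + base w := by decide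
      have : toAdd (ofAdd (2 : ZMod 4) * g) = 2 + toAdd g := rfl
      rw [this, add_assoc, key, ← ofAdd_add]

def E (f : CS) : Multiplicative (ZMod 4) :=
  ofAdd (toAdd (f.toFun 1 : Multiplicative (ZMod 4)) +
    hlf (toAdd (f.toFun (ofAdd 1) : Multiplicative (ZMod 4)) - toAdd (f.toFun 1 : Multiplicative (ZMod 4))))

-- values of f at ofAdd 2, ofAdd 3 determined
theorem val2 (f : CS) : (f.toFun (ofAdd 2) : Multiplicative (ZMod 4)) = ofAdd 2 * (f.toFun 1 : Multiplicative (ZMod 4)) := by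
  have := f.compat h2 1
  have := congrArg Subtype.val this
  simpa [h2] using this

theorem val3 (f : CS) : (f.toFun (ofAdd 3) : Multiplicative (ZMod 4)) = ofAdd 2 * (f.toFun (ofAdd 1) : Multiplicative (ZMod 4)) := by
  have := f.compat h2 (ofAdd 1)
  have := congrArg Subtype.val this
  have h23 : ((h2 : Multiplicative (ZMod 4))) * ofAdd (1:ZMod 4) = ofAdd 3 := by
    show (ofAdd (2:ZMod 4)) * ofAdd (1:ZMod 4) = ofAdd 3; decide
  rw [h23] at this
  simpa [h2] using this

theorem ext2 (f f' : CS) (h1 : f.toFun 1 = f'.toFun 1) (h2' : f.toFun (ofAdd 1) = f'.toFun (ofAdd 1)) : f = f' := by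
  apply CoindSet.ext'
  funext x
  have hx : x = 1 ∨ x = ofAdd 1 ∨ x = ofAdd 2 ∨ x = ofAdd 3 := by
    revert x; decide
  rcases hx with rfl | rfl | rfl | rfl
  · exact h1
  · exact h2'
  · exact Subtype.ext (by rw [val2, val2, h1])
  · exact Subtype.ext (by rw [val3, val3, h2'])

theorem E_F (c : Multiplicative (ZMod 4)) : E (F c) = c := by
  show ofAdd (base (toAdd (1:Multiplicative (ZMod 4)) + toAdd c) + hlf (base (toAdd (ofAdd (1:ZMod 4)) + toAdd c) - base (toAdd (1:Multiplicative (ZMod 4)) + toAdd c))) = c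
  revert c
  decide

theorem F_E (f : CS) : F (E f) = f := by
  obtain ⟨a, ha⟩ : ∃ a, (f.toFun 1 : Multiplicative (ZMod 4)) = ofAdd a ∧ (a = 0 ∨ a = 2) := by
    rcases K4_mem (f.toFun 1) with h | h
    · exact ⟨0, h, Or.inl rfl⟩
    · exact ⟨2, h, Or.inr rfl⟩
  obtain ⟨b, hb⟩ : ∃ b, (f.toFun (ofAdd 1) : Multiplicative (ZMod 4)) = ofAdd b ∧ (b = 0 ∨ b = 2) := by
    rcases K4_mem (f.toFun (ofAdd 1)) with h | h
    · exact ⟨0, h, Or.inl rfl⟩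
    · exact ⟨2, h, Or.inr rfl⟩
  have hE : E f = ofAdd (a + hlf (b - a)) := by
    unfold E; rw [ha.1, hb.1, toAdd_ofAdd, toAdd_ofAdd]
  apply ext2
  · apply Subtype.ext
    show ofAdd (base (toAdd (1:Multiplicative (ZMod 4)) + toAdd (E f))) = _
    rw [hE, ha.1]
    have : ∀ a b : ZMod 4, (a = 0 ∨ a = 2) → (b = 0 ∨ b = 2) →
        ofAdd (base (toAdd (1:Multiplicative (ZMod 4)) + toAdd (ofAdd (a + hlf (b-a))))) = ofAdd a := by decide
    exact this a b ha.2 hb.2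
  · apply Subtype.ext
    show ofAdd (base (toAdd (ofAdd (1:ZMod 4)) + toAdd (E f))) = _
    rw [hE, hb.1]
    have : ∀ a b : ZMod 4, (a = 0 ∨ a = 2) → (b = 0 ∨ b = 2) →
        ofAdd (base (toAdd (ofAdd (1:ZMod 4)) + toAdd (ofAdd (a + hlf (b-a))))) = ofAdd b := by decide
    exact this a b ha.2 hb.2

theorem Heq (H : Subgroup (Multiplicative (ZMod 4))) (hH : Nat.card H = 2) : H = K4 := by
  have hfin : Finite H := Nat.finite_of_card_ne_zero (by omega)
  have hsq : ∀ x ∈ H, x * x = 1 := by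
    intro x hx
    have h1 : (⟨x, hx⟩ : H) ^ 2 = 1 := by rw [← hH]; exact pow_card_eq_one'
    have := congrArg Subtype.val h1
    simpa [pow_two] using this
  have hnt : Nontrivial H := Finite.one_lt_card_iff_nontrivial.mp (by omega)
  obtain ⟨x, hx1⟩ := exists_ne (1 : H)
  have key : ∀ z : Multiplicative (ZMod 4), z * z = 1 → z ≠ 1 → z = ofAdd 2 := by decide
  have hx2 : (x : Multiplicative (ZMod 4)) = ofAdd 2 :=
    key x (hsq x x.2) (fun h => hx1 (Subtype.ext h))
  have key2 : ∀ z : Multiplicative (ZMod 4), z * z = 1 → z = 1 ∨ z = ofAdd 2 := by decide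
  ext y
  constructor
  · intro hy
    exact key2 y (hsq y hy)
  · rintro (rfl | rfl)
    · exact H.one_mem
    · exact hx2 ▸ x.2

theorem act_mul (g g' : Multiplicative (ZMod 4)) (f : CS) :
    coindAct (g * g') f = coindAct g (coindAct g' f) :=
  CoindSet.ext' (funext fun x => congrArg f.toFun (mul_assoc x g g').symm)

theorem act_one (f : CS) : coindAct 1 f = f :=
  CoindSet.ext' (funext fun x => congrArg f.toFun (mul_one x))

theorem Egen (f : CS) : E (coindAct (ofAdd 1) f) = ofAdd 1 * E f := by
  obtain ⟨a, ha⟩ : ∃ a, (f.toFun 1 : Multiplicative (ZMod 4)) = ofAdd a ∧ (a = 0 ∨ a = 2) := by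
    rcases K4_mem (f.toFun 1) with h | h
    · exact ⟨0, h, Or.inl rfl⟩
    · exact ⟨2, h, Or.inr rfl⟩
  obtain ⟨b, hb⟩ : ∃ b, (f.toFun (ofAdd 1) : Multiplicative (ZMod 4)) = ofAdd b ∧ (b = 0 ∨ b = 2) := by
    rcases K4_mem (f.toFun (ofAdd 1)) with h | h
    · exact ⟨0, h, Or.inl rfl⟩
    · exact ⟨2, h, Or.inr rfl⟩
  have h1 : ((coindAct (ofAdd 1) f).toFun 1 : Multiplicative (ZMod 4)) = ofAdd b := by
    show (f.toFun (1 * ofAdd 1) : Multiplicative (ZMod 4)) = ofAdd b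
    rw [one_mul]; exact hb.1
  have h2' : ((coindAct (ofAdd 1) f).toFun (ofAdd 1) : Multiplicative (ZMod 4)) = ofAdd (2 + a) := by
    show (f.toFun (ofAdd 1 * ofAdd 1) : Multiplicative (ZMod 4)) = ofAdd (2 + a)
    have : (ofAdd (1:ZMod 4)) * ofAdd 1 = ofAdd 2 := by decide
    rw [this, val2, ha.1]; rfl
  unfold E
  rw [h1, h2', ha.1, hb.1]
  simp only [toAdd_ofAdd]
  have key : ∀ a b : ZMod 4, (a = 0 ∨ a = 2) → (b = 0 ∨ b = 2) →
      ofAdd (b + hlf (2 + a - b)) = ofAdd (1:ZMod 4) * ofAdd (a + hlf (b - a)) := by decide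
  exact key a b ha.2 hb.2

theorem Eequiv (g : Multiplicative (ZMod 4)) (f : CS) : E (coindAct g f) = g * E f := by
  have hpow : ∀ (n : ℕ) (f : CS),
      E (coindAct ((ofAdd (1:ZMod 4)) ^ n) f) = (ofAdd (1:ZMod 4)) ^ n * E f := by
    intro n
    induction n with
    | zero => intro f; rw [pow_zero, act_one, one_mul]
    | succ n ih =>
      intro f
      rw [pow_succ, act_mul, ih, Egen, ← mul_assoc, ← pow_succ]
  have hg : g = (ofAdd (1:ZMod 4)) ^ (toAdd g).val := by
    have h1 : (ofAdd (1:ZMod 4)) ^ (toAdd g).val = ofAdd (((toAdd g).val : ℕ) : ZMod 4) := by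
      rw [← ofAdd_nsmul]; norm_num
    rw [h1, ZMod.natCast_rightInverse (toAdd g)]; rfl
  rw [hg, hpow]

/-- For `G` cyclic of order 4 and `H` its (unique) subgroup of order 2, the coinduction
to `G` of the `H`-set `H` (with left multiplication) is a free transitive `G`-set:
it is `G`-equivariantly bijective to `G` with left translation. -/
theorem stmt8 (H : Subgroup (Multiplicative (ZMod 4))) (hH : Nat.card H = 2) :
    ∃ e : CoindSet (Multiplicative (ZMod 4)) H H (fun h x => h * x) ≃
        Multiplicative (ZMod 4),
      ∀ (g : Multiplicative (ZMod 4))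
        (f : CoindSet (Multiplicative (ZMod 4)) H H (fun h x => h * x)),
        e (coindAct g f) = g * e f := by
  have := Heq H hH
  subst this
  exact ⟨⟨E, F, F_E, E_F⟩, Eequiv⟩
end

section
/- Let G be a cyclic group of order 4 (for instance Multiplicative (ZMod 4)) and H its unique subgroup of order 2. Let X be a two-element set with trivial H-action. Consider the coinduced G-set Coind_H^G X = {f : G → X | f(h·g) = h·f(g) for all h ∈ H, g ∈ G} with G-action (g·f)(g') = f(g'·g). Then there is a G-equivariant bijection from Coind_H^G X to the disjoint union of two one-point G-sets and the coset G-set G/H; equivalently, Coind_H^G X has exactly two fixed points and one further orbit, of size 2, whose point stabilizers equal H. -/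
private lemma coind_ext {H : Subgroup (Multiplicative (ZMod 4))}
    (f g : CoindSet (Multiplicative (ZMod 4)) H Bool (fun _ b => b))
    (h : f.toFun = g.toFun) : f = g := by
  cases f; cases g; cases h; rfl

/-- For `G` cyclic of order 4 and `H` its (unique) subgroup of order 2, the coinduction
to `G` of a two-element set `X = Bool` with trivial `H`-action is `G`-equivariantly
bijective to the disjoint union of two one-point `G`-sets and the coset `G`-set `G ⧸ H`
(on which `G` acts by left translation, and trivially on the two points). -/
theorem stmt9 (H : Subgroup (Multiplicative (ZMod 4))) (hH : Nat.card H = 2) :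
    ∃ e : CoindSet (Multiplicative (ZMod 4)) H Bool (fun _ b => b) ≃
        ((Unit ⊕ Unit) ⊕ Multiplicative (ZMod 4) ⧸ H),
      ∀ (g : Multiplicative (ZMod 4))
        (f : CoindSet (Multiplicative (ZMod 4)) H Bool (fun _ b => b)),
        e (coindAct g f) = Sum.map id (fun x => g • x) (e f) := by
  classical
  -- every element of `H` squares to 1
  have hsq : ∀ x ∈ H, x * x = 1 := by
    intro x hx
    have h1 : (⟨x, hx⟩ : H) ^ Nat.card H = 1 := pow_card_eq_one'
    rw [hH] at h1
    have h2 := congrArg (Subtype.val) h1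
    simpa [pow_two] using h2
  have hres : ∀ x : Multiplicative (ZMod 4), x * x = 1 →
      x = 1 ∨ x = Multiplicative.ofAdd 2 := by decide
  have hs : Multiplicative.ofAdd (2 : ZMod 4) ∈ H := by
    have hnt : Nontrivial H := Finite.one_lt_card_iff_nontrivial.mp (by rw [hH]; norm_num)
    obtain ⟨y, hy⟩ := exists_ne (1 : H)
    rcases hres y (hsq y y.2) with h | h
    · exact absurd (Subtype.ext h) hy
    · rw [← h]; exact y.2
  have hmem : ∀ g : Multiplicative (ZMod 4),
      g ∈ H ↔ g = 1 ∨ g = Multiplicative.ofAdd (2 : ZMod 4) := by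
    intro g
    constructor
    · intro hg; exact hres g (hsq g hg)
    · rintro (rfl | rfl)
      · exact H.one_mem
      · exact hs
  have hsqmem : ∀ y : Multiplicative (ZMod 4), y * y ∈ H := by
    intro y
    exact (hmem _).mpr
      ((show ∀ z : Multiplicative (ZMod 4), z * z = 1 ∨ z * z = Multiplicative.ofAdd 2
        by decide) y)
  have hq : ∀ x y : Multiplicative (ZMod 4),
      (QuotientGroup.mk x : _ ⧸ H) = QuotientGroup.mk y ↔
        (x⁻¹ * y = 1 ∨ x⁻¹ * y = Multiplicative.ofAdd 2) := by
    intro x y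
    rw [QuotientGroup.eq, hmem]
  have cover : ∀ x : Multiplicative (ZMod 4),
      (QuotientGroup.mk x : _ ⧸ H) = QuotientGroup.mk 1 ∨
      (QuotientGroup.mk x : _ ⧸ H) = QuotientGroup.mk (Multiplicative.ofAdd 1) := by
    intro x
    rcases (show (x⁻¹ * 1 = 1 ∨ x⁻¹ * 1 = Multiplicative.ofAdd 2) ∨
        (x⁻¹ * Multiplicative.ofAdd 1 = 1 ∨
          x⁻¹ * Multiplicative.ofAdd 1 = Multiplicative.ofAdd 2) by revert x; decide)
      with h | h
    · exact Or.inl ((hq x 1).mpr h)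
    · exact Or.inr ((hq x (Multiplicative.ofAdd 1)).mpr h)
  have haH : (QuotientGroup.mk (Multiplicative.ofAdd 1) : _ ⧸ H) ≠ QuotientGroup.mk 1 := by
    intro h
    have h2 := (hq _ _).mp h
    revert h2; decide
  -- values of a coinduced function only depend on the coset
  have hval : ∀ (f : CoindSet (Multiplicative (ZMod 4)) H Bool (fun _ b => b))
      (x y : Multiplicative (ZMod 4)),
      (QuotientGroup.mk x : _ ⧸ H) = QuotientGroup.mk y → f.toFun x = f.toFun y := by
    intro f x y hxy
    rw [QuotientGroup.eq] at hxy
    have h := f.compat ⟨x⁻¹ * y, hxy⟩ x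
    have h2 : (x⁻¹ * y) * x = y := by
      rw [mul_comm]; exact mul_inv_cancel_left x y
    rw [show ((⟨x⁻¹ * y, hxy⟩ : H) : Multiplicative (ZMod 4)) * x = y from h2] at h
    exact h.symm
  refine ⟨{
    toFun := fun f =>
      match f.toFun 1, f.toFun (Multiplicative.ofAdd 1) with
      | true, true => Sum.inl (Sum.inl ())
      | false, false => Sum.inl (Sum.inr ())
      | true, false => Sum.inr (QuotientGroup.mk 1)
      | false, true => Sum.inr (QuotientGroup.mk (Multiplicative.ofAdd 1))
    invFun := fun z => match z with
      | Sum.inl (Sum.inl _) => ⟨fun _ => true, fun _ _ => rfl⟩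
      | Sum.inl (Sum.inr _) => ⟨fun _ => false, fun _ _ => rfl⟩
      | Sum.inr q => ⟨fun x => decide ((QuotientGroup.mk x : _ ⧸ H) = q), by
          intro h g
          show decide _ = decide _
          refine decide_eq_decide.mpr ?_
          rw [mul_comm (h : Multiplicative (ZMod 4)) g, QuotientGroup.mk_mul_of_mem g h.2]⟩
    left_inv := ?_
    right_inv := ?_ }, ?_⟩
  · -- left inverse
    intro f
    dsimp only
    cases h1 : f.toFun 1 <;> cases h2 : f.toFun (Multiplicative.ofAdd 1) <;>
        simp only [h1, h2] <;> apply coind_ext <;> funext x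
    · -- (false, false)
      rcases cover x with hx | hx
      · rw [hval f x 1 hx, h1]
      · rw [hval f x _ hx, h2]
    · -- (false, true) : true on the coset of ofAdd 1
      show decide _ = f.toFun x
      rcases cover x with hx | hx
      · rw [hval f x 1 hx, h1]
        exact decide_eq_false (fun h => haH (h.symm.trans hx))
      · rw [hval f x _ hx, h2]
        exact decide_eq_true hx
    · -- (true, false) : true on the coset of 1
      show decide _ = f.toFun x
      rcases cover x with hx | hx
      · rw [hval f x 1 hx, h1]
        exact decide_eq_true hx
      · rw [hval f x _ hx, h2]
        exact decide_eq_false (fun h => haH (hx.symm.trans h))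
    · -- (true, true)
      rcases cover x with hx | hx
      · rw [hval f x 1 hx, h1]
      · rw [hval f x _ hx, h2]
  · -- right inverse
    rintro ((⟨⟩ | ⟨⟩) | q)
    · rfl
    · rfl
    · induction q using QuotientGroup.induction_on with
      | H c =>
        dsimp only
        rcases cover c with hc | hc
        · have e1 : decide ((QuotientGroup.mk 1 : _ ⧸ H) = QuotientGroup.mk c) = true :=
            decide_eq_true hc.symm
          have e2 : decide ((QuotientGroup.mk (Multiplicative.ofAdd 1) : _ ⧸ H)
              = QuotientGroup.mk c) = false :=
            decide_eq_false (fun h => haH (h.trans hc))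
          rw [e1, e2]
          dsimp only
          rw [hc]
        · have e1 : decide ((QuotientGroup.mk 1 : _ ⧸ H) = QuotientGroup.mk c) = false :=
            decide_eq_false (fun h => haH ((h.trans hc).symm))
          have e2 : decide ((QuotientGroup.mk (Multiplicative.ofAdd 1) : _ ⧸ H)
              = QuotientGroup.mk c) = true := decide_eq_true hc.symm
          rw [e1, e2]
          dsimp only
          rw [hc]
  · -- equivariance
    intro g f
    dsimp only [coindAct, Equiv.coe_fn_mk]
    rcases cover g with hg | hg
    · -- g ∈ H
      have hgH : g ∈ H := by
        have h := (QuotientGroup.eq).mp hg.symm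
        simpa using h
      have k1 : f.toFun (1 * g) = f.toFun 1 := by
        rw [one_mul]
        exact hval f g 1 hg
      have k2 : f.toFun (Multiplicative.ofAdd 1 * g) = f.toFun (Multiplicative.ofAdd 1) :=
        hval f _ _ (QuotientGroup.mk_mul_of_mem (Multiplicative.ofAdd 1) hgH)
      have fix : ∀ c : Multiplicative (ZMod 4),
          g • (QuotientGroup.mk c : _ ⧸ H) = QuotientGroup.mk c := by
        intro c
        show QuotientGroup.mk (g * c) = QuotientGroup.mk c
        rw [mul_comm]
        exact QuotientGroup.mk_mul_of_mem c hgH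
      have fix1 : g • (1 : _ ⧸ H) = 1 := fix 1
      rw [k1, k2]
      cases h1 : f.toFun 1 <;> cases h2 : f.toFun (Multiplicative.ofAdd 1) <;>
        simp [h1, h2, fix, fix1]
    · -- g in the nontrivial coset
      have hginv : g⁻¹ * Multiplicative.ofAdd 1 ∈ H := (QuotientGroup.eq).mp hg
      have hag : Multiplicative.ofAdd 1 * g ∈ H := by
        have h3 : Multiplicative.ofAdd (1 : ZMod 4) * g =
            (g * g) * (g⁻¹ * Multiplicative.ofAdd 1) := by
          rw [mul_assoc, mul_inv_cancel_left, mul_comm]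
        rw [h3]
        exact H.mul_mem (hsqmem g) hginv
      have k1 : f.toFun (1 * g) = f.toFun (Multiplicative.ofAdd 1) := by
        rw [one_mul]
        exact hval f g (Multiplicative.ofAdd 1) hg
      have k2 : f.toFun (Multiplicative.ofAdd 1 * g) = f.toFun 1 := by
        refine hval f _ _ ?_
        rw [QuotientGroup.eq]
        simpa using H.inv_mem hag
      have m1 : g • (QuotientGroup.mk 1 : _ ⧸ H) =
          QuotientGroup.mk (Multiplicative.ofAdd 1) := by
        show QuotientGroup.mk (g * 1) = _
        rw [mul_one]
        exact hg
      have m2 : g • (QuotientGroup.mk (Multiplicative.ofAdd 1) : _ ⧸ H) =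
          QuotientGroup.mk 1 := by
        show QuotientGroup.mk (g * Multiplicative.ofAdd 1) = _
        rw [QuotientGroup.eq]
        simpa [mul_comm] using H.inv_mem hag
      have m1' : g • (1 : _ ⧸ H) = QuotientGroup.mk (Multiplicative.ofAdd 1) := m1
      have m2' : g • (QuotientGroup.mk (Multiplicative.ofAdd 1) : _ ⧸ H) = 1 := m2
      rw [k1, k2]
      cases h1 : f.toFun 1 <;> cases h2 : f.toFun (Multiplicative.ofAdd 1) <;>
        simp [h1, h2, m1, m2, m1', m2']
end
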